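/- Exact joint law of sequential speculative decoding (Theorem 1): let p* be a strictly positive probability mass function on V^L, and for each m ∈ {1,…,L} and each prefix w ∈ V^{m-1} let π_m(· | w) be the chain-rule conditional of p* at position m given prefix w, and let ρ_m(· | w) be an arbitrary probability mass function on V (the draft law). Define the committed kernel κ_m(a | w) = min(π_m(a | w), ρ_m(a | w)) + r_m(w) · π'_m(a | w) when r_m(w) = 1 − ∑_z min(π_m(z | w), ρ_m(z | w)) > 0, where π'_m(a | w) = max(π_m(a | w) − ρ_m(a | w), 0)/r_m(w), and κ_m(a | w) = min(π_m(a | w), ρ_m(a | w)) when r_m(w) = 0. Then the sequence generated by sampling each position left to right from the committed kernels has joint law p*: for every x ∈ V^L, ∏_{m=1}^{L} κ_m(x^m | x^{<m}) = p*(x). -/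

import Mathlib

open scoped Classical

/-- Chain-rule conditional of a pmf `pstar` on `V^L` at position `m` given a
prefix `w ∈ V^m` (0-based):
`π_m(a | w) = P(X^m = a | X^{<m} = w)`. -/
noncomputable def chainCond {V : Type*} [Fintype V] {L : ℕ}
    (pstar : (Fin L → V) → ℝ) (m : Fin L) (w : Fin (m : ℕ) → V) (a : V) : ℝ :=
  (∑ y : Fin L → V,
      if (∀ j : Fin L, (hj : (j : ℕ) < (m : ℕ)) → y j = w ⟨j, hj⟩) ∧ y m = a
      then pstar y else 0) /
  (∑ y : Fin L → V,
      if ∀ j : Fin L, (hj : (j : ℕ) < (m : ℕ)) → y j = w ⟨j, hj⟩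
      then pstar y else 0)

/-- The law of the token committed by one speculative accept–reject step with
target `π` and draft `ρ`: a draft token `a ~ ρ` is accepted with probability
`min 1 (π a / ρ a)` (accepted mass `min (π a) (ρ a)`); upon rejection
(probability `r = 1 - ∑ z, min (π z) (ρ z)`), a corrected token is sampled from
the residual distribution `π' a = max (π a - ρ a) 0 / r`. -/
noncomputable def committedKernel {V : Type*} [Fintype V] (π ρ : V → ℝ) (a : V) : ℝ :=
  if 1 - ∑ z, min (π z) (ρ z) = 0 then min (π a) (ρ a)
  else min (π a) (ρ a) +
    (1 - ∑ z, min (π z) (ρ z)) *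
      (max (π a - ρ a) 0 / (1 - ∑ z, min (π z) (ρ z)))

/-!
Each committed kernel equals its target, since accepted and residual mass add up to
`min (π a) (ρ a) + max (π a - ρ a) 0 = π a`. The product of the chain-rule conditionals
along `x` then telescopes: the `m`-th factor is the ratio of the masses of the
cylinders of sequences agreeing with `x` on the first `m + 1` and on the first `m`
positions, and these masses run from `∑ y, pstar y = 1` down to `pstar x`.
-/

open Finset

lemma min_add_max_sub_zero {α : Type*} [AddCommGroup α] [LinearOrder α] [IsOrderedAddMonoid α]
    (a b : α) : min a b + max (a - b) 0 = a := by
  rcases le_total a b with hab | hab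
  · rw [min_eq_left hab, max_eq_right (sub_nonpos.mpr hab), add_zero]
  · rw [min_eq_right hab, max_eq_left (sub_nonneg.mpr hab), add_sub_cancel]

lemma committedKernel_eq_self {V : Type*} [Fintype V] (π ρ : V → ℝ)
    (hπ : ∑ a, π a = 1) (a : V) : committedKernel π ρ a = π a := by
  unfold committedKernel
  split_ifs with hr
  · -- no rejection mass: `min (π z) (ρ z) ≤ π z` with equal totals forces equality
    have htot : ∑ z, (π z - min (π z) (ρ z)) = 0 := by
      rw [sum_sub_distrib, hπ]; linarith
    have := (sum_eq_zero_iff_of_nonneg fun z _ =>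
      sub_nonneg.mpr (min_le_left (π z) (ρ z))).mp htot a (mem_univ a)
    linarith
  · rw [mul_div_cancel₀ _ hr, min_add_max_sub_zero]

lemma prod_range_div_of_ne_zero {G₀ : Type*} [CommGroupWithZero G₀] (f : ℕ → G₀) (hf : ∀ k, f k ≠ 0) (n : ℕ) :
    ∏ i ∈ range n, f (i + 1) / f i = f n / f 0 := by
  induction n with
  | zero => simp [hf 0]
  | succ n ih =>
    rw [prod_range_succ, ih, mul_comm, div_mul_div_cancel₀ (hf n)]

lemma forall_lt_succ_update_iff {V : Type*} {L : ℕ} (x y : Fin L → V) (m : Fin L) (a : V) :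
    (∀ j : Fin L, (j : ℕ) < m + 1 → y j = Function.update x m a j) ↔
      (∀ j : Fin L, (j : ℕ) < m → y j = x j) ∧ y m = a := by
  constructor
  · intro h
    refine ⟨fun j hj => ?_, by simpa using h m (Nat.lt_succ_self _)⟩
    rw [h j (Nat.lt_succ_of_lt hj), Function.update_of_ne (Fin.ne_of_lt hj)]
  · rintro ⟨hlt, rfl⟩ j hj
    rcases (Nat.lt_succ_iff_lt_or_eq.mp hj) with hj | hj
    · rw [hlt j hj, Function.update_of_ne (Fin.ne_of_lt hj)]
    · obtain rfl := Fin.ext hj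
      simp

section PrefixMass

variable {V : Type*} [Fintype V] {L : ℕ}

noncomputable def prefixMass (p : (Fin L → V) → ℝ) (x : Fin L → V) (k : ℕ) : ℝ :=
  ∑ y, if ∀ j : Fin L, (j : ℕ) < k → y j = x j then p y else 0

lemma prefixMass_zero (p : (Fin L → V) → ℝ) (x : Fin L → V) :
    prefixMass p x 0 = ∑ y, p y := by
  simp [prefixMass]

lemma prefixMass_length (p : (Fin L → V) → ℝ) (x : Fin L → V) :
    prefixMass p x L = p x := by
  have hcyl : ∀ y : Fin L → V, (∀ j : Fin L, (j : ℕ) < L → y j = x j) ↔ y = x :=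
    fun y => ⟨fun h => funext fun j => h j j.isLt, fun h j _ => h ▸ rfl⟩
  simp only [prefixMass, hcyl, sum_ite_eq', mem_univ, if_true]

lemma le_prefixMass {p : (Fin L → V) → ℝ} (hp : ∀ y, 0 ≤ p y) (x : Fin L → V) (k : ℕ) :
    p x ≤ prefixMass p x k := by
  unfold prefixMass
  simpa using single_le_sum
    (f := fun y => if ∀ j : Fin L, (j : ℕ) < k → y j = x j then p y else 0)
    (fun y _ => by split_ifs <;> simp [hp y]) (mem_univ x)

lemma chainCond_prefix (p : (Fin L → V) → ℝ) (x : Fin L → V) (m : Fin L) (a : V) :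
    chainCond p m (fun j => x (Fin.castLE m.isLt.le j)) a =
      prefixMass p (Function.update x m a) (m + 1) / prefixMass p x m := by
  unfold chainCond prefixMass
  simp only [forall_lt_succ_update_iff]
  rfl

lemma chainCond_prefix_self (p : (Fin L → V) → ℝ) (x : Fin L → V) (m : Fin L) :
    chainCond p m (fun j => x (Fin.castLE m.isLt.le j)) (x m) =
      prefixMass p x (m + 1) / prefixMass p x m := by
  rw [chainCond_prefix, Function.update_eq_self]

lemma sum_prefixMass_update (p : (Fin L → V) → ℝ) (x : Fin L → V) (m : Fin L) :
    ∑ a, prefixMass p (Function.update x m a) (m + 1) = prefixMass p x m := by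
  simp only [prefixMass, forall_lt_succ_update_iff, ite_and]
  rw [sum_comm]
  refine sum_congr rfl fun y _ => ?_
  split_ifs <;> simp

lemma sum_chainCond_prefix (p : (Fin L → V) → ℝ) (x : Fin L → V) (m : Fin L)
    (hm : prefixMass p x m ≠ 0) :
    ∑ a, chainCond p m (fun j => x (Fin.castLE m.isLt.le j)) a = 1 := by
  simp only [chainCond_prefix, ← sum_div, sum_prefixMass_update, div_self hm]

end PrefixMass

theorem speculative_decoding_exact_joint_law_general
    {V : Type*} [Fintype V] {L : ℕ}
    (pstar : (Fin L → V) → ℝ)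
    (hpos : ∀ x, 0 < pstar x) (hsum : ∑ x, pstar x = 1)
    (ρ : (m : Fin L) → (Fin (m : ℕ) → V) → V → ℝ) :
    ∀ x : Fin L → V,
      (∏ m : Fin L,
        committedKernel
          (chainCond pstar m (fun j => x (Fin.castLE m.isLt.le j)))
          (ρ m (fun j => x (Fin.castLE m.isLt.le j)))
          (x m)) = pstar x := by
  intro x
  have hmass : ∀ k, prefixMass pstar x k ≠ 0 := fun k =>
    ((hpos x).trans_le (le_prefixMass (fun y => (hpos y).le) x k)).ne'
  calc _ = ∏ m : Fin L, prefixMass pstar x (m + 1) / prefixMass pstar x m :=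
        prod_congr rfl fun m _ => by
          rw [committedKernel_eq_self _ _ (sum_chainCond_prefix pstar x m (hmass m)),
            chainCond_prefix_self]
    _ = ∏ k ∈ range L, prefixMass pstar x (k + 1) / prefixMass pstar x k :=
        Fin.prod_univ_eq_prod_range (fun k => prefixMass pstar x (k + 1) / prefixMass pstar x k) L
    _ = pstar x := by
        rw [prod_range_div_of_ne_zero _ hmass, prefixMass_length, prefixMass_zero, hsum,
          div_one]

/-- Theorem 1, Exact joint law: sampling each position left to
right from the committed kernels built from the chain-rule conditionals `π_m`
of a strictly positive pmf `pstar` and arbitrary draft laws `ρ_m` produces a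
sequence with joint law exactly `pstar`. -/
theorem speculative_decoding_exact_joint_law
    {V : Type*} [Fintype V] [Nonempty V] {L : ℕ} (hL : 0 < L)
    (pstar : (Fin L → V) → ℝ)
    (hpos : ∀ x, 0 < pstar x) (hsum : ∑ x, pstar x = 1)
    (ρ : (m : Fin L) → (Fin (m : ℕ) → V) → V → ℝ)
    (hρ0 : ∀ m w a, 0 ≤ ρ m w a) (hρ1 : ∀ m w, ∑ a, ρ m w a = 1) :
    ∀ x : Fin L → V,
      (∏ m : Fin L,
        committedKernel
          (chainCond pstar m (fun j => x (Fin.castLE m.isLt.le j)))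
          (ρ m (fun j => x (Fin.castLE m.isLt.le j)))
          (x m)) = pstar x :=
  speculative_decoding_exact_joint_law_general pstar hpos hsum ρ
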